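/- For every $x\in[0,1]$ and every integer $d\geq 3$, the regularized incomplete beta function satisfies $I_x\left(\tfrac{d-1}{2},\tfrac{1}{2}\right) \geq \frac{2}{\sqrt{\pi}(d-1)}\left(\frac{d}{2}-\frac{3}{4}\right)^{1/2} x^{(d-1)/2}$. -/

import Mathlib

open Real

/-!
Put `a = (d - 1) / 2`. The denominator is `B(a, 1/2) = √π Γ(a) / Γ(a + 1/2)`, and since
`(1 - t)^(-1/2) ≥ 1` the numerator is at least `∫₀ˣ t^(a-1) dt = x^a / a`; what remains is
Kershaw's inequality `√(a - 1/4) Γ(a) ≤ Γ(a + 1/2)`. The ratio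
`Γ(t + 1/2)² / ((t - 1/4) Γ(t)²)` does not increase when `t` grows by `1`, and log-convexity
of `Γ` at the midpoint `t + 1` of `t + 1/2` and `t + 3/2` bounds it below by `1 - 1/t`;
letting `t → ∞` along `t + ℕ` shows that it is at least `1`.
-/

lemma Gamma_midpoint_sq_le {s t : ℝ} (hs : 0 < s) (ht : 0 < t) :
    Gamma ((s + t) / 2) ^ 2 ≤ Gamma s * Gamma t := by
  have h := Gamma_mul_add_mul_le_rpow_Gamma_mul_rpow_Gamma hs ht (a := 1 / 2) (b := 1 / 2)
    (by norm_num) (by norm_num) (by norm_num)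
  rw [← sqrt_eq_rpow, ← sqrt_eq_rpow, show 1 / 2 * s + 1 / 2 * t = (s + t) / 2 by ring] at h
  calc Gamma ((s + t) / 2) ^ 2 ≤ (√(Gamma s) * √(Gamma t)) ^ 2 :=
        pow_le_pow_left₀ (Gamma_pos_of_pos (by positivity)).le h 2
    _ = Gamma s * Gamma t := by
        rw [mul_pow, sq_sqrt (Gamma_pos_of_pos hs).le, sq_sqrt (Gamma_pos_of_pos ht).le]

lemma sq_mul_Gamma_sq_le {t : ℝ} (ht : 0 < t) :
    t ^ 2 * Gamma t ^ 2 ≤ (t + 1 / 2) * Gamma (t + 1 / 2) ^ 2 := by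
  have h := Gamma_midpoint_sq_le (s := t + 1 / 2) (t := t + 1 / 2 + 1) (by positivity)
    (by positivity)
  rw [show (t + 1 / 2 + (t + 1 / 2 + 1)) / 2 = t + 1 by ring, Gamma_add_one ht.ne',
    Gamma_add_one (by positivity)] at h
  nlinarith

noncomputable def kershawRatio (t : ℝ) : ℝ :=
  Gamma (t + 1 / 2) ^ 2 / ((t - 1 / 4) * Gamma t ^ 2)

lemma kershawRatio_add_one_le {t : ℝ} (ht : 1 / 4 < t) :
    kershawRatio (t + 1) ≤ kershawRatio t := by
  have h0 : 0 < t := by linarith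
  have hG : 0 < Gamma t := Gamma_pos_of_pos h0
  rw [kershawRatio, kershawRatio, add_right_comm, Gamma_add_one (by positivity),
    Gamma_add_one h0.ne', div_le_div_iff₀ (mul_pos (by linarith) (by positivity))
      (mul_pos (by linarith) (by positivity))]
  have hpoly : (t + 1 / 2) ^ 2 * (t - 1 / 4) ≤ (t + 1 - 1 / 4) * t ^ 2 := by nlinarith
  have := mul_le_mul_of_nonneg_right hpoly
    (mul_nonneg (sq_nonneg (Gamma (t + 1 / 2))) (sq_nonneg (Gamma t)))
  nlinarith

lemma kershawRatio_add_nat_le {t : ℝ} (ht : 1 / 4 < t) (n : ℕ) :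
    kershawRatio (t + n) ≤ kershawRatio t := by
  induction n with
  | zero => simp
  | succ n ih =>
    push_cast
    rw [← add_assoc]
    exact (kershawRatio_add_one_le (by linarith [n.cast_nonneg (α := ℝ)])).trans ih

lemma one_sub_inv_le_kershawRatio {t : ℝ} (ht : 1 / 4 < t) : 1 - t⁻¹ ≤ kershawRatio t := by
  have h0 : 0 < t := by linarith
  have hG : 0 < Gamma t := Gamma_pos_of_pos h0
  have hW := sq_mul_Gamma_sq_le h0
  have hpoly : (t - 1) * (t - 1 / 4) * (t + 1 / 2) ≤ t ^ 3 := by nlinarith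
  have hsub : 1 - t⁻¹ = (t - 1) / t := by field_simp
  rw [kershawRatio, le_div_iff₀ (mul_pos (by linarith) (by positivity)), hsub,
    div_mul_eq_mul_div, div_le_iff₀ h0]
  refine le_of_mul_le_mul_right ?_ (by linarith : 0 < t + 1 / 2)
  nlinarith [mul_le_mul_of_nonneg_right hpoly (sq_nonneg (Gamma t)),
    mul_le_mul_of_nonneg_left hW h0.le]

lemma one_le_kershawRatio {t : ℝ} (ht : 1 / 4 < t) : 1 ≤ kershawRatio t := by
  have hlim : Filter.Tendsto (fun n : ℕ ↦ 1 - (t + n)⁻¹) Filter.atTop (nhds 1) := by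
    simpa using tendsto_const_nhds.sub
      (Filter.tendsto_atTop_add_const_left _ t tendsto_natCast_atTop_atTop).inv_tendsto_atTop
  exact le_of_tendsto' hlim fun n ↦
    (one_sub_inv_le_kershawRatio (by linarith [n.cast_nonneg (α := ℝ)])).trans
      (kershawRatio_add_nat_le ht n)

theorem sqrt_sub_quarter_mul_Gamma_le_Gamma_add_half {t : ℝ} (ht : 1 / 4 < t) :
    √(t - 1 / 4) * Gamma t ≤ Gamma (t + 1 / 2) := by
  have hG : 0 < Gamma t := Gamma_pos_of_pos (by linarith)
  have h := one_le_kershawRatio ht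
  rw [kershawRatio, one_le_div (by nlinarith [sq_pos_of_pos hG])] at h
  have h := sqrt_le_sqrt h
  rwa [sqrt_mul (by linarith), sqrt_sq hG.le, sqrt_sq (Gamma_pos_of_pos (by linarith)).le] at h

lemma ofReal_rpow_mul_one_sub_rpow (α β : ℝ) {t : ℝ} (ht : t ∈ Set.Icc (0 : ℝ) 1) :
    ((t ^ (α - 1) * (1 - t) ^ (β - 1) : ℝ) : ℂ) =
      (t : ℂ) ^ (α - 1 : ℂ) * (1 - t : ℂ) ^ (β - 1 : ℂ) := by
  rw [Complex.ofReal_mul, Complex.ofReal_cpow ht.1, Complex.ofReal_cpow (sub_nonneg.2 ht.2)]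
  push_cast
  rfl

lemma intervalIntegrable_rpow_mul_one_sub_rpow {α β : ℝ} (hα : 0 < α) (hβ : 0 < β) :
    IntervalIntegrable (fun t : ℝ ↦ t ^ (α - 1) * (1 - t) ^ (β - 1))
      MeasureTheory.volume 0 1 := by
  refine (Complex.betaIntegral_convergent (u := α) (v := β) (by simpa) (by simpa)).norm.congr
    fun t ht ↦ ?_
  rw [Set.uIoc_of_le zero_le_one] at ht
  rw [← ofReal_rpow_mul_one_sub_rpow α β (Set.Ioc_subset_Icc_self ht), Complex.norm_real,
    Real.norm_of_nonneg (mul_nonneg (rpow_nonneg ht.1.le _) (rpow_nonneg (sub_nonneg.2 ht.2) _))]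

lemma integral_rpow_mul_one_sub_rpow {α β : ℝ} (hα : 0 < α) (hβ : 0 < β) :
    ∫ t in (0 : ℝ)..1, t ^ (α - 1) * (1 - t) ^ (β - 1) = ProbabilityTheory.beta α β := by
  rw [ProbabilityTheory.beta_eq_betaIntegralReal α β hα hβ, Complex.betaIntegral,
    ← intervalIntegral.integral_congr fun t ht ↦ ofReal_rpow_mul_one_sub_rpow α β
      (by rwa [Set.uIcc_of_le zero_le_one] at ht),
    intervalIntegral.integral_ofReal, Complex.ofReal_re]

lemma rpow_div_le_integral_rpow_mul_one_sub_rpow {α β x : ℝ} (hα : 0 < α) (hβ : 0 < β)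
    (hβ₁ : β ≤ 1) (hx : x ∈ Set.Icc (0 : ℝ) 1) :
    x ^ α / α ≤ ∫ t in (0 : ℝ)..x, t ^ (α - 1) * (1 - t) ^ (β - 1) := by
  have hpow : ∫ t in (0 : ℝ)..x, t ^ (α - 1) = x ^ α / α := by
    rw [integral_rpow (Or.inl (by linarith)), sub_add_cancel, zero_rpow hα.ne', sub_zero]
  rw [← hpow]
  refine intervalIntegral.integral_mono_on_of_le_Ioo hx.1
    (intervalIntegral.intervalIntegrable_rpow' (by linarith))
    ((intervalIntegrable_rpow_mul_one_sub_rpow hα hβ).mono_set ?_) fun t ht ↦ ?_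
  · rw [Set.uIcc_of_le hx.1, Set.uIcc_of_le zero_le_one]
    exact Set.Icc_subset_Icc_right hx.2
  · have hone : 1 ≤ (1 - t) ^ (β - 1) :=
      one_le_rpow_of_pos_of_le_one_of_nonpos (by linarith [ht.2, hx.2]) (by linarith [ht.1])
        (by linarith)
    exact le_mul_of_one_le_right (rpow_nonneg ht.1.le _) hone

lemma rpow_div_mul_beta_le_integral_div_integral {α β x : ℝ} (hα : 0 < α) (hβ : 0 < β)
    (hβ₁ : β ≤ 1) (hx : x ∈ Set.Icc (0 : ℝ) 1) :
    x ^ α / (α * ProbabilityTheory.beta α β) ≤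
      (∫ t in (0 : ℝ)..x, t ^ (α - 1) * (1 - t) ^ (β - 1)) /
        ∫ t in (0 : ℝ)..1, t ^ (α - 1) * (1 - t) ^ (β - 1) := by
  rw [integral_rpow_mul_one_sub_rpow hα hβ, ← div_div]
  exact div_le_div_of_nonneg_right (rpow_div_le_integral_rpow_mul_one_sub_rpow hα hβ hβ₁ hx)
    (ProbabilityTheory.beta_pos hα hβ).le

theorem stmt5 (x : ℝ) (hx : x ∈ Set.Icc (0:ℝ) 1) (d : ℕ) (hd : 3 ≤ d) :
    (2 / (Real.sqrt π * ((d:ℝ) - 1))) * Real.sqrt ((d:ℝ)/2 - 3/4)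
        * x ^ (((d:ℝ) - 1)/2)
      ≤ (∫ t in (0:ℝ)..x, t ^ (((d:ℝ) - 1)/2 - 1) * (1 - t) ^ ((1:ℝ)/2 - 1))
        / (∫ t in (0:ℝ)..1, t ^ (((d:ℝ) - 1)/2 - 1) * (1 - t) ^ ((1:ℝ)/2 - 1)) := by
  have hd₃ : (3 : ℝ) ≤ d := by exact_mod_cast hd
  set a : ℝ := ((d : ℝ) - 1) / 2 with ha
  have ha₀ : 0 < a := by linarith
  refine le_trans ?_ (rpow_div_mul_beta_le_integral_div_integral ha₀ one_half_pos
    one_half_lt_one.le hx)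
  calc 2 / (√π * ((d : ℝ) - 1)) * √((d : ℝ) / 2 - 3 / 4) * x ^ a
      = √(a - 1 / 4) * Gamma a * x ^ a / (a * (Gamma a * √π)) := by
        rw [show (d : ℝ) / 2 - 3 / 4 = a - 1 / 4 by linarith,
          show (d : ℝ) - 1 = 2 * a by linarith]
        field_simp
    _ ≤ Gamma (a + 1 / 2) * x ^ a / (a * (Gamma a * √π)) := by
        have hK := sqrt_sub_quarter_mul_Gamma_le_Gamma_add_half (t := a) (by linarith)
        have hxa := rpow_nonneg hx.1 a
        gcongr
    _ = x ^ a / (a * ProbabilityTheory.beta a (1 / 2)) := by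
        rw [ProbabilityTheory.beta, Gamma_one_half_eq]
        field_simp
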